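/- arXiv:2212.08265 — 4 statements merged into one kernel-verified Lean document; each statement's English description precedes it below -/
import Mathlib

section
/- If a quantum channel C satisfies Cᵀ = C (invariance under transposition), then C admits a Kraus representation {Ψ_j} in which every Kraus operator is either symmetric or antisymmetric. -/
open Matrix BigOperators

/-- If a quantum channel (given by Kraus operators `K`) is invariant under transposition,
then it admits a Kraus representation `{Ψ_j}` in which every Kraus operator is either
symmetric or antisymmetric. -/
theorem exists_symm_antisymm_kraus_of_transpose_invariant {d r : ℕ}
    (K : Fin r → Matrix (Fin d) (Fin d) ℂ)
    (hTP : ∑ i, (K i)ᴴ * K i = 1)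
    (hinv : ∀ ρ : Matrix (Fin d) (Fin d) ℂ,
      ∑ i, (K i)ᵀ * ρ * ((K i)ᵀ)ᴴ = ∑ i, K i * ρ * (K i)ᴴ) :
    ∃ (m : ℕ) (Ψ : Fin m → Matrix (Fin d) (Fin d) ℂ),
      (∀ j, (Ψ j)ᵀ = Ψ j ∨ (Ψ j)ᵀ = -(Ψ j)) ∧
      (∀ ρ : Matrix (Fin d) (Fin d) ℂ,
        ∑ j, Ψ j * ρ * (Ψ j)ᴴ = ∑ i, K i * ρ * (K i)ᴴ) := by
  refine ⟨r + r,
    Fin.append (fun i => (1/2 : ℂ) • (K i + (K i)ᵀ)) (fun i => (1/2 : ℂ) • (K i - (K i)ᵀ)),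
    ?_, ?_⟩
  · intro j
    induction j using Fin.addCases with
    | left i =>
      left
      rw [Fin.append_left]
      simp [Matrix.transpose_smul, Matrix.transpose_add, add_comm]
    | right i =>
      right
      rw [Fin.append_right]
      simp [Matrix.transpose_smul, Matrix.transpose_sub, ← smul_neg, neg_sub]
  · intro ρ
    rw [Fin.sum_univ_add]
    simp only [Fin.append_left, Fin.append_right]
    have key : ∀ i : Fin r,
        ((1/2 : ℂ) • (K i + (K i)ᵀ)) * ρ * ((1/2 : ℂ) • (K i + (K i)ᵀ))ᴴ
        + ((1/2 : ℂ) • (K i - (K i)ᵀ)) * ρ * ((1/2 : ℂ) • (K i - (K i)ᵀ))ᴴ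
        = (1/2 : ℂ) • (K i * ρ * (K i)ᴴ) + (1/2 : ℂ) • ((K i)ᵀ * ρ * ((K i)ᵀ)ᴴ) := by
      intro i
      have hs : star (1/2 : ℂ) = (1/2 : ℂ) := by norm_num
      simp only [Matrix.conjTranspose_smul, hs, Matrix.conjTranspose_add,
        Matrix.conjTranspose_sub, Matrix.smul_mul, Matrix.mul_smul, smul_smul,
        Matrix.add_mul, Matrix.mul_add, Matrix.sub_mul, Matrix.mul_sub]
      rw [← sub_eq_zero]
      ext a b
      simp [Matrix.add_apply, Matrix.sub_apply, Matrix.smul_apply]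
      ring
    rw [← Finset.sum_add_distrib]
    simp_rw [key]
    rw [Finset.sum_add_distrib, ← Finset.smul_sum, ← Finset.smul_sum, hinv ρ, ← add_smul]
    norm_num
end

section
/- For a transposition-invariant channel C with Kraus operators partitioned into symmetric operators {C_i : i ∈ S_sym} and antisymmetric operators {C_i : i ∈ S_anti}, the time-flipped channel with control state |+⟩⟨+| satisfies F_{|+⟩⟨+|}(C)(ρ) = Σ_{i∈S_sym} C_i ρ C_i† ⊗ |+⟩⟨+| + Σ_{i∈S_anti} C_i ρ C_i† ⊗ |−⟩⟨−|. -/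
open Matrix BigOperators Kronecker

/-- The control state `|+⟩⟨+|`. -/
noncomputable def plusM : Matrix (Fin 2) (Fin 2) ℂ := Matrix.of fun _ _ => (1 : ℂ) / 2

/-- The control state `|−⟩⟨−|`. -/
noncomputable def minusM : Matrix (Fin 2) (Fin 2) ℂ :=
  Matrix.of fun i j => if i = j then (1 : ℂ) / 2 else -((1 : ℂ) / 2)

/-- `|0⟩⟨0|` on the control qubit. -/
def e00 : Matrix (Fin 2) (Fin 2) ℂ := Matrix.of fun i j => if i = 0 ∧ j = 0 then 1 else 0

/-- `|1⟩⟨1|` on the control qubit. -/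
def e11 : Matrix (Fin 2) (Fin 2) ℂ := Matrix.of fun i j => if i = 1 ∧ j = 1 then 1 else 0

/-- The Kraus operators of the quantum time flip: `F_i = C_i⊗|0⟩⟨0| + C_iᵀ⊗|1⟩⟨1|`. -/
noncomputable def flipK {d : ℕ} (C : Matrix (Fin d) (Fin d) ℂ) :
    Matrix (Fin d × Fin 2) (Fin d × Fin 2) ℂ := C ⊗ₖ e00 + Cᵀ ⊗ₖ e11

lemma kron_conjTranspose {m n : ℕ} (A : Matrix (Fin m) (Fin m) ℂ)
    (B : Matrix (Fin n) (Fin n) ℂ) : (A ⊗ₖ B)ᴴ = Aᴴ ⊗ₖ Bᴴ := by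
  ext ⟨a, b⟩ ⟨c, e⟩
  simp [Matrix.conjTranspose_apply, Matrix.kroneckerMap_apply]

lemma sum_kron {r m n : ℕ} (s : Finset (Fin r)) (f : Fin r → Matrix (Fin m) (Fin m) ℂ)
    (B : Matrix (Fin n) (Fin n) ℂ) :
    (∑ i ∈ s, f i) ⊗ₖ B = ∑ i ∈ s, f i ⊗ₖ B := by
  induction s using Finset.cons_induction with
  | empty => simp [Matrix.zero_kronecker]
  | cons i s hi ih => simp [Finset.sum_insert hi, Matrix.add_kronecker, ih]

lemma kron_sub_right {m n : ℕ} (A : Matrix (Fin m) (Fin m) ℂ)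
    (B C : Matrix (Fin n) (Fin n) ℂ) : A ⊗ₖ B - A ⊗ₖ C = A ⊗ₖ (B - C) := by
  ext ⟨a, b⟩ ⟨c, e⟩; simp [Matrix.kroneckerMap_apply]; ring

lemma e_ctrl : ∀ a c : Fin 2, Matrix.of (fun i j => if i = a ∧ j = a then (1:ℂ) else 0) *
    plusM * Matrix.of (fun i j => if i = c ∧ j = c then (1:ℂ) else 0)
    = Matrix.of fun i j => if i = a ∧ j = c then (1:ℂ)/2 else 0 := by
  intro a c
  ext i j
  simp [Matrix.mul_apply, plusM, Fin.sum_univ_two]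
  fin_cases a <;> fin_cases c <;> fin_cases i <;> fin_cases j <;> norm_num

lemma flip_sym {d : ℕ} (M : Matrix (Fin d) (Fin d) ℂ) (h : Mᵀ = M)
    (ρ : Matrix (Fin d) (Fin d) ℂ) :
    flipK M * (ρ ⊗ₖ plusM) * (flipK M)ᴴ = (M * ρ * Mᴴ) ⊗ₖ plusM := by
  rw [flipK, h]
  rw [conjTranspose_add, kron_conjTranspose, kron_conjTranspose]
  have h00 : e00ᴴ = e00 := by ext i j; simp [e00, Matrix.conjTranspose_apply, and_comm]
  have h11 : e11ᴴ = e11 := by ext i j; simp [e11, Matrix.conjTranspose_apply, and_comm]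
  rw [h00, h11]
  simp only [add_mul, mul_add]
  simp only [← Matrix.mul_kronecker_mul]
  ext ⟨i1, i2⟩ ⟨j1, j2⟩
  simp only [Matrix.add_apply, Matrix.kroneckerMap_apply, Matrix.mul_apply, e00, e11, plusM,
    Matrix.of_apply, Fin.sum_univ_two]
  fin_cases i2 <;> fin_cases j2 <;> simp <;> ring

lemma flip_anti {d : ℕ} (M : Matrix (Fin d) (Fin d) ℂ) (h : Mᵀ = -M)
    (ρ : Matrix (Fin d) (Fin d) ℂ) :
    flipK M * (ρ ⊗ₖ plusM) * (flipK M)ᴴ = (M * ρ * Mᴴ) ⊗ₖ minusM := by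
  rw [flipK, h]
  rw [conjTranspose_add, kron_conjTranspose, kron_conjTranspose]
  have h00 : e00ᴴ = e00 := by ext i j; simp [e00, Matrix.conjTranspose_apply, and_comm]
  have h11 : e11ᴴ = e11 := by ext i j; simp [e11, Matrix.conjTranspose_apply, and_comm]
  rw [h00, h11]
  simp only [add_mul, mul_add]
  simp only [← Matrix.mul_kronecker_mul]
  ext ⟨i1, i2⟩ ⟨j1, j2⟩
  simp only [Matrix.add_apply, Matrix.kroneckerMap_apply, Matrix.mul_apply, e00, e11, plusM,
    minusM, Matrix.of_apply, Fin.sum_univ_two, Matrix.neg_apply, Matrix.conjTranspose_apply,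
    map_neg]
  fin_cases i2 <;> fin_cases j2 <;> simp [Matrix.mul_apply] <;> ring

/-- For a transposition-invariant channel with Kraus operators partitioned into symmetric
and antisymmetric ones, the time-flipped channel with control state `|+⟩⟨+|` satisfies
`F_{|+⟩⟨+|}(C)(ρ) = Σ_{i∈S_sym} C_iρC_i† ⊗ |+⟩⟨+| + Σ_{i∈S_anti} C_iρC_i† ⊗ |−⟩⟨−|`. -/
theorem timeFlip_of_symm_antisymm_partition {d r : ℕ}
    (K : Fin r → Matrix (Fin d) (Fin d) ℂ)
    (hTP : ∑ i, (K i)ᴴ * K i = 1)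
    (Ssym Santi : Finset (Fin r))
    (hdisj : Disjoint Ssym Santi) (hcover : Ssym ∪ Santi = Finset.univ)
    (hsym : ∀ i ∈ Ssym, (K i)ᵀ = K i) (hanti : ∀ i ∈ Santi, (K i)ᵀ = -(K i))
    (ρ : Matrix (Fin d) (Fin d) ℂ) :
    ∑ i, flipK (K i) * (ρ ⊗ₖ plusM) * (flipK (K i))ᴴ
      = (∑ i ∈ Ssym, K i * ρ * (K i)ᴴ) ⊗ₖ plusM
        + (∑ i ∈ Santi, K i * ρ * (K i)ᴴ) ⊗ₖ minusM := by
  rw [show (Finset.univ : Finset (Fin r)) = Ssym ∪ Santi from hcover.symm,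
    Finset.sum_union hdisj, sum_kron, sum_kron]
  congr 1
  · exact Finset.sum_congr rfl fun i hi => flip_sym (K i) (hsym i hi) ρ
  · exact Finset.sum_congr rfl fun i hi => flip_anti (K i) (hanti i hi) ρ
end

section
/- For the qubit depolarising channel N_q(ρ) = (1−q)ρ + q·I/2, the time-flipped channel with control |+⟩⟨+| satisfies F_{|+⟩⟨+|}(N_q)(ρ) = (1 − q/4)·C₊(ρ)⊗|+⟩⟨+| + (q/4)·YρY⊗|−⟩⟨−|, where C₊(ρ) = [4(1−q)ρ + q(ρ + XρX + ZρZ)]/(4−q). -/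
open Matrix BigOperators Kronecker

/-- Pauli X. -/
def pX : Matrix (Fin 2) (Fin 2) ℂ := !![0, 1; 1, 0]
/-- Pauli Y. -/
def pY : Matrix (Fin 2) (Fin 2) ℂ := !![0, -Complex.I; Complex.I, 0]
/-- Pauli Z. -/
def pZ : Matrix (Fin 2) (Fin 2) ℂ := !![1, 0; 0, -1]

/-- Kraus operators of the qubit depolarising channel `N_q`. -/
noncomputable def depolK (q : ℝ) : Fin 4 → Matrix (Fin 2) (Fin 2) ℂ :=
  ![((Real.sqrt (1 - 3 * q / 4) : ℝ) : ℂ) • 1,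
    ((Real.sqrt (q / 4) : ℝ) : ℂ) • pX,
    ((Real.sqrt (q / 4) : ℝ) : ℂ) • pY,
    ((Real.sqrt (q / 4) : ℝ) : ℂ) • pZ]

set_option maxHeartbeats 2000000

/-- For the qubit depolarising channel `N_q`, the time-flipped channel with control
`|+⟩⟨+|` is `(1 − q/4)·C₊(ρ)⊗|+⟩⟨+| + (q/4)·YρY⊗|−⟩⟨−|`, where
`C₊(ρ) = [4(1−q)ρ + q(ρ + XρX + ZρZ)]/(4−q)`. -/
theorem timeFlip_depolarising_qubit (q : ℝ) (hq0 : 0 ≤ q) (hq1 : q ≤ 1)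
    (ρ : Matrix (Fin 2) (Fin 2) ℂ) :
    ∑ i, flipK (depolK q i) * (ρ ⊗ₖ plusM) * (flipK (depolK q i))ᴴ
      = ((1 - q / 4 : ℝ) : ℂ) •
          ((((4 - q : ℝ) : ℂ)⁻¹ •
            (((4 * (1 - q) : ℝ) : ℂ) • ρ + ((q : ℝ) : ℂ) • (ρ + pX * ρ * pX + pZ * ρ * pZ)))
            ⊗ₖ plusM)
        + ((q / 4 : ℝ) : ℂ) • ((pY * ρ * pY) ⊗ₖ minusM) := by
  have h4q : (4 - (q : ℂ)) ≠ 0 := by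
    intro h
    have : ((4 - q : ℝ) : ℂ) = 0 := by push_cast; linear_combination h
    rw [Complex.ofReal_eq_zero] at this; linarith
  have key : ∀ (c : ℝ) (C : Matrix (Fin 2) (Fin 2) ℂ),
      flipK ((c : ℂ) • C) * (ρ ⊗ₖ plusM) * (flipK ((c : ℂ) • C))ᴴ
        = ((c ^ 2 : ℝ) : ℂ) • (flipK C * (ρ ⊗ₖ plusM) * (flipK C)ᴴ) := by
    intro c C
    have h1 : flipK ((c : ℂ) • C) = (c : ℂ) • flipK C := by
      simp [flipK, Matrix.transpose_smul, Matrix.smul_kronecker, smul_add]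
    rw [h1, Matrix.smul_mul, Matrix.smul_mul, Matrix.conjTranspose_smul, Matrix.mul_smul,
      smul_smul, Complex.star_def, Complex.conj_ofReal]
    push_cast
    ring_nf
  rw [Fin.sum_univ_four]
  show flipK (depolK q 0) * _ * _ + _ + _ + _ = _
  simp only [depolK, Matrix.cons_val_zero, Matrix.cons_val_one, Matrix.head_cons,
    Matrix.cons_val_two, Matrix.tail_cons, Matrix.cons_val_three]
  rw [key, key, key, key, Real.sq_sqrt (by linarith), Real.sq_sqrt (by linarith)]
  have hco : ∀ M : Matrix (Fin 2) (Fin 2) ℂ,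
      ((1 - q / 4 : ℝ) : ℂ) • ((((4 - q : ℝ) : ℂ)⁻¹ • M) ⊗ₖ plusM)
        = ((4 : ℂ))⁻¹ • (M ⊗ₖ plusM) := by
    intro M
    rw [Matrix.smul_kronecker, smul_smul]
    congr 1
    have h4 : ((4 - q : ℝ) : ℂ) ≠ 0 := by push_cast; exact h4q
    field_simp
    push_cast
    ring
  rw [hco]
  ext ⟨i, a⟩ ⟨j, b⟩
  fin_cases i <;> fin_cases j <;> fin_cases a <;> fin_cases b <;>
    · simp only [flipK, plusM, minusM, e00, e11, pX, pY, pZ, Matrix.mul_apply,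
        Matrix.add_apply, Matrix.smul_apply, Matrix.kroneckerMap_apply,
        Matrix.conjTranspose_apply, Matrix.transpose_apply, Matrix.of_apply,
        Fintype.sum_prod_type, Fin.sum_univ_two, Matrix.cons_val', Matrix.cons_val_zero,
        Matrix.cons_val_one, Matrix.head_cons, Matrix.empty_val', Matrix.cons_val_fin_one,
        Matrix.head_fin_const, Matrix.one_apply, smul_eq_mul, Complex.star_def, map_add,
        _root_.map_mul, _root_.map_one, map_zero, map_neg, Complex.conj_I, Complex.conj_ofReal,
        Fin.isValue, if_true, if_false, one_ne_zero, zero_ne_one, ite_true, ite_false,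
        reduceIte, star_one, star_zero, Fin.zero_eta, Fin.mk_one, and_self, and_true,
        true_and, false_and, and_false, Fin.one_eq_zero_iff, Fin.zero_eq_one_iff, ne_eq,
        Nat.succ_ne_self, OfNat.ofNat_ne_one, OfNat.one_ne_ofNat]
      push_cast
      first
      | ring
      | (simp only [Complex.I_sq]; ring)
end

section
/- Let E be a quantum channel on d×d matrices and ρ a density matrix such that E(C(ρ)) is the same state for every channel C whose Kraus operators are all symmetric matrices. Then E(C(ρ)) = E(I/d) for every such C. -/
/-!
`E` is linear, so it kills `C ρ - C' ρ` for any two symmetric channels `C`, `C'`. Take `C` the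
pinching in the computational basis and `C'` the pinching in a basis rotated within the plane of
`eᵢ, eⱼ`: the difference is a combination of `eᵢᵢ - eⱼⱼ` and `eᵢⱼ + eⱼᵢ` whose coefficients depend on
the angle. For two angles the resulting linear system has determinant proportional to `g² + t²`
with `g = ρᵢᵢ - ρⱼⱼ`, `t = ρᵢⱼ + ρⱼᵢ` real, so `E eᵢᵢ = E eⱼⱼ` whenever `ρᵢᵢ ≠ ρⱼⱼ`. Then
`E (pinching ρ) = ∑ ρᵢᵢ • E eᵢᵢ` equals the plain average of the `E eᵢᵢ`, which is `E (I / d)`.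
-/

open Matrix BigOperators
open scoped ComplexOrder

/-- A map is a symmetric-Kraus channel if it admits a Kraus representation in which every
Kraus operator is a symmetric matrix, and these Kraus operators are trace-preserving. -/
def IsSymChan {d : ℕ} (f : Matrix (Fin d) (Fin d) ℂ → Matrix (Fin d) (Fin d) ℂ) : Prop :=
  ∃ (r : ℕ) (K : Fin r → Matrix (Fin d) (Fin d) ℂ),
    (∀ i, (K i)ᵀ = K i) ∧ (∑ i, (K i)ᴴ * K i = 1) ∧
    ∀ ρ, f ρ = ∑ i, K i * ρ * (K i)ᴴ

lemma Fintype.sum_apply_update {ι α M : Type*} [Fintype ι] [DecidableEq ι] [AddCommGroup M]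
    (g : α → M) (f : ι → α) (i : ι) (b : α) :
    ∑ x, g (Function.update f i b x) = ∑ x, g (f x) - g (f i) + g b := by
  simp only [← Function.comp_apply (f := g), Function.comp_update,
    Finset.sum_update_of_mem (Finset.mem_univ i), Fintype.sum_eq_sum_compl_add i (g ∘ f),
    Finset.compl_eq_univ_sdiff]
  abel

lemma Fintype.sum_smul_eq_inv_card_smul_sum {K V ι : Type*} [Field K] [CharZero K]
    [AddCommGroup V] [Module K V] [Fintype ι] (p : ι → K) (w : ι → V) (hp : ∑ i, p i = 1)
    (h : ∀ i j, (p i - p j) • (w i - w j) = 0) :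
    ∑ i, p i • w i = (Fintype.card ι : K)⁻¹ • ∑ i, w i := by
  have hsum : ∑ i, ∑ j, (p i - p j) • (w i - w j)
      = (2 : K) • ((Fintype.card ι : K) • ∑ i, p i • w i - ∑ i, w i) := by
    simp only [sub_smul, smul_sub, Finset.sum_sub_distrib, ← Finset.smul_sum, ← Finset.sum_smul,
      hp, one_smul, Finset.sum_const, Finset.card_univ, smul_comm (p _) (Fintype.card ι),
      Nat.cast_smul_eq_nsmul]
    module
  have : Nonempty ι := by
    by_contra hι
    simp [not_nonempty_iff.mp hι] at hp
  simp only [h, Finset.sum_const_zero] at hsum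
  rw [eq_comm, smul_eq_zero_iff_right two_ne_zero, sub_eq_zero] at hsum
  rw [← hsum, inv_smul_smul₀ (Nat.cast_ne_zero.mpr Fintype.card_ne_zero)]

lemma Complex.sq_add_sq_ne_zero {z w : ℂ} (hz : star z = z) (hw : star w = w) (h : z ≠ 0) :
    z ^ 2 + w ^ 2 ≠ 0 := by
  obtain ⟨x, rfl⟩ := Complex.conj_eq_iff_real.mp hz
  obtain ⟨y, rfl⟩ := Complex.conj_eq_iff_real.mp hw
  have hx : x ≠ 0 := by exact_mod_cast h
  exact_mod_cast (by positivity : x ^ 2 + y ^ 2 ≠ 0)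

lemma Matrix.single_one_mul_mul_single_one {ι R : Type*} [Fintype ι] [DecidableEq ι]
    [Semiring R] (i j k l : ι) (ρ : Matrix ι ι R) :
    single i j 1 * ρ * single k l 1 = ρ j k • single i l 1 := by
  rw [single_mul_mul_single, smul_single, smul_eq_mul, mul_one, mul_one, one_mul]

section Kraus

variable {R ι m n : Type*} [CommRing R] [StarRing R] [Fintype ι] [Fintype n]

def krausMap (K : ι → Matrix m n R) : Matrix n n R →ₗ[R] Matrix m m R where
  toFun ρ := ∑ i, K i * ρ * (K i)ᴴ
  map_add' ρ σ := by simp only [Matrix.mul_add, Matrix.add_mul, Finset.sum_add_distrib]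
  map_smul' c ρ := by
    simp only [Matrix.mul_smul, Matrix.smul_mul, Finset.smul_sum, RingHom.id_apply]

lemma krausMap_apply (K : ι → Matrix m n R) (ρ : Matrix n n R) :
    krausMap K ρ = ∑ i, K i * ρ * (K i)ᴴ := rfl

lemma krausMap_update [DecidableEq ι] (K : ι → Matrix m n R) (i : ι) (A : Matrix m n R)
    (ρ : Matrix n n R) :
    krausMap (Function.update K i A) ρ = krausMap K ρ - K i * ρ * (K i)ᴴ + A * ρ * Aᴴ :=
  Fintype.sum_apply_update (fun X => X * ρ * Xᴴ) K i A

end Kraus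

lemma isSymChan_krausMap {d r : ℕ} (K : Fin r → Matrix (Fin d) (Fin d) ℂ)
    (hK : ∀ i, (K i)ᵀ = K i) (hsum : ∑ i, (K i)ᴴ * K i = 1) : IsSymChan (krausMap K) :=
  ⟨r, K, hK, hsum, fun _ => rfl⟩

section Pinching

variable {ι : Type*} [DecidableEq ι]

def pinchKraus (i : ι) : Matrix ι ι ℂ := single i i 1

/-- Orthogonal projector onto the line spanned by `a • eᵢ + b • eⱼ`; `rotProj i j (-b) a` is
the projector onto the orthogonal line in the same coordinate plane. -/
noncomputable def rotProj (i j : ι) (a b : ℝ) : Matrix ι ι ℂ :=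
  ((a : ℂ) ^ 2 + (b : ℂ) ^ 2)⁻¹ • ((a : ℂ) ^ 2 • single i i 1
    + ((a : ℂ) * b) • (single i j 1 + single j i 1) + (b : ℂ) ^ 2 • single j j 1)

noncomputable def rotPinchKraus (i j : ι) (a b : ℝ) : ι → Matrix ι ι ℂ :=
  Function.update (Function.update pinchKraus i (rotProj i j a b)) j (rotProj i j (-b) a)

lemma pinchKraus_transpose (i : ι) : (pinchKraus i)ᵀ = pinchKraus i :=
  transpose_single i i 1

variable (i j : ι) (a b : ℝ)

lemma rotProj_transpose : (rotProj i j a b)ᵀ = rotProj i j a b := by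
  simp only [rotProj, transpose_smul, transpose_add, transpose_single]
  abel_nf

lemma rotProj_conjTranspose : (rotProj i j a b)ᴴ = rotProj i j a b := by
  simp only [rotProj, conjTranspose_smul, conjTranspose_add, conjTranspose_single, star_one,
    star_inv₀, star_add, star_pow, star_mul', RCLike.star_def, Complex.conj_ofReal]
  abel_nf

lemma rotPinchKraus_transpose (k : ι) : (rotPinchKraus i j a b k)ᵀ = rotPinchKraus i j a b k := by
  simp only [rotPinchKraus, Function.update_apply]
  split_ifs
  exacts [rotProj_transpose .., rotProj_transpose .., pinchKraus_transpose k]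

variable [Fintype ι]

lemma sum_conjTranspose_mul_pinchKraus : ∑ i : ι, (pinchKraus i)ᴴ * pinchKraus i = 1 := by
  simp [pinchKraus, conjTranspose_single, sum_single_one]

lemma krausMap_pinchKraus (ρ : Matrix ι ι ℂ) :
    krausMap pinchKraus ρ = ∑ i, ρ i i • single i i 1 := by
  simp [krausMap_apply, pinchKraus, conjTranspose_single]

lemma rotProj_mul_self_add_mul_self (hij : i ≠ j) (hab : a ^ 2 + b ^ 2 ≠ 0) :
    rotProj i j a b * rotProj i j a b + rotProj i j (-b) a * rotProj i j (-b) a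
      = single i i 1 + single j j 1 := by
  have hab' : (a : ℂ) ^ 2 + (b : ℂ) ^ 2 ≠ 0 := by exact_mod_cast hab
  have hba : (b : ℂ) ^ 2 + (a : ℂ) ^ 2 ≠ 0 := by rwa [add_comm]
  simp only [rotProj, Complex.ofReal_neg, neg_sq, smul_mul_assoc, mul_smul_comm, add_mul,
    mul_add, single_mul_single_same, single_mul_single_of_ne _ _ _ _ hij,
    single_mul_single_of_ne _ _ _ _ hij.symm, smul_zero, mul_one]
  match_scalars <;> field_simp <;> ring

lemma sum_conjTranspose_mul_rotPinchKraus (hij : i ≠ j) (hab : a ^ 2 + b ^ 2 ≠ 0) :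
    ∑ k, (rotPinchKraus i j a b k)ᴴ * rotPinchKraus i j a b k = 1 := by
  rw [rotPinchKraus, Fintype.sum_apply_update (fun X => Xᴴ * X),
    Fintype.sum_apply_update (fun X => Xᴴ * X), Function.update_of_ne hij.symm,
    sum_conjTranspose_mul_pinchKraus, rotProj_conjTranspose, rotProj_conjTranspose]
  have h := rotProj_mul_self_add_mul_self i j a b hij hab
  simp only [pinchKraus, conjTranspose_single, star_one, single_mul_single_same, mul_one]
  rw [← sub_eq_zero, ← sub_eq_zero.mpr h]
  abel

lemma krausMap_rotPinchKraus_sub (hij : i ≠ j) (hab : a ^ 2 + b ^ 2 ≠ 0)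
    (ρ : Matrix ι ι ℂ) :
    krausMap (rotPinchKraus i j a b) ρ - krausMap pinchKraus ρ
      = ((a : ℂ) * b / ((a : ℂ) ^ 2 + (b : ℂ) ^ 2) ^ 2) •
        ((((a : ℂ) ^ 2 - (b : ℂ) ^ 2) * (ρ i j + ρ j i) - 2 * a * b * (ρ i i - ρ j j))
            • (single i i 1 - single j j 1)
          + (((a : ℂ) ^ 2 - (b : ℂ) ^ 2) * (ρ i i - ρ j j) + 2 * a * b * (ρ i j + ρ j i))
            • (single i j 1 + single j i 1)) := by
  have hab' : (a : ℂ) ^ 2 + (b : ℂ) ^ 2 ≠ 0 := by exact_mod_cast hab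
  have hba : (b : ℂ) ^ 2 + (a : ℂ) ^ 2 ≠ 0 := by rwa [add_comm]
  rw [rotPinchKraus, krausMap_update, krausMap_update, Function.update_of_ne hij.symm,
    rotProj_conjTranspose, rotProj_conjTranspose]
  simp only [pinchKraus, conjTranspose_single, star_one, rotProj, Complex.ofReal_neg, neg_sq,
    smul_mul_assoc, mul_smul_comm, add_mul, mul_add, single_one_mul_mul_single_one, smul_smul]
  match_scalars <;> field_simp <;> ring

lemma diag_sub_smul_map_single_sub_eq_zero {V : Type*} [AddCommGroup V]
    [Module ℂ V] (L : Matrix ι ι ℂ →ₗ[ℂ] V) {ρ : Matrix ι ι ℂ} (hρ : ρ.IsHermitian) {i j : ι}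
    (hij : i ≠ j)
    (h₁ : L (krausMap (rotPinchKraus i j 1 1) ρ) = L (krausMap pinchKraus ρ))
    (h₂ : L (krausMap (rotPinchKraus i j 2 1) ρ) = L (krausMap pinchKraus ρ)) :
    (ρ i i - ρ j j) • L (single i i 1 - single j j 1) = 0 := by
  set G := ρ i i - ρ j j
  set T := ρ i j + ρ j i
  have e₁ := congrArg L (krausMap_rotPinchKraus_sub i j 1 1 hij (by norm_num) ρ)
  have e₂ := congrArg L (krausMap_rotPinchKraus_sub i j 2 1 hij (by norm_num) ρ)
  rw [map_sub, h₁, sub_self, map_smul, map_add, map_smul, map_smul] at e₁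
  rw [map_sub, h₂, sub_self, map_smul, map_add, map_smul, map_smul] at e₂
  set x := L (single i i 1 - single j j 1)
  push_cast at e₁ e₂
  have hG : star G = G := by simp [G, hρ.apply]
  have hT : star T = T := by simp [T, hρ.apply, add_comm]
  rcases eq_or_ne G 0 with hG0 | hG0
  · rw [hG0, zero_smul]
  have key : (G ^ 2 + T ^ 2) • x = 0 := by
    linear_combination (norm := module) ((2 / 3) * (3 * G + 4 * T)) • e₁ - ((25 / 6) * T) • e₂
  rw [smul_eq_zero_iff_right (Complex.sq_add_sq_ne_zero hG hT hG0)] at key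
  rw [key, smul_zero]

end Pinching

lemma isSymChan_krausMap_pinchKraus {d : ℕ} : IsSymChan (krausMap (pinchKraus (ι := Fin d))) :=
  isSymChan_krausMap _ pinchKraus_transpose sum_conjTranspose_mul_pinchKraus

lemma isSymChan_krausMap_rotPinchKraus {d : ℕ} {i j : Fin d} (hij : i ≠ j) (a b : ℝ)
    (hab : a ^ 2 + b ^ 2 ≠ 0) : IsSymChan (krausMap (rotPinchKraus i j a b)) :=
  isSymChan_krausMap _ (rotPinchKraus_transpose i j a b)
    (sum_conjTranspose_mul_rotPinchKraus i j a b hij hab)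

theorem output_eq_of_constant_on_symmetric_channels_general {d e : ℕ}
    (E : Matrix (Fin d) (Fin d) ℂ → Matrix (Fin e) (Fin e) ℂ)
    (hE : ∃ (r : ℕ) (K : Fin r → Matrix (Fin e) (Fin d) ℂ),
      (∑ i, (K i)ᴴ * K i = 1) ∧ ∀ ρ, E ρ = ∑ i, K i * ρ * (K i)ᴴ)
    (ρ : Matrix (Fin d) (Fin d) ℂ) (hρ : ρ.PosSemidef) (htr : ρ.trace = 1)
    (hconst : ∀ f g, IsSymChan f → IsSymChan g → E (f ρ) = E (g ρ)) :
    ∀ f, IsSymChan f → E (f ρ) = E ((d : ℂ)⁻¹ • (1 : Matrix (Fin d) (Fin d) ℂ)) := by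
  obtain ⟨r, K, -, hK⟩ := hE
  obtain rfl : E = krausMap K := funext hK
  have hpinch := isSymChan_krausMap_pinchKraus (d := d)
  have hgap (i j : Fin d) :
      (ρ i i - ρ j j) • (krausMap K (single i i 1) - krausMap K (single j j 1)) = 0 := by
    rcases eq_or_ne i j with rfl | hij
    · rw [sub_self, zero_smul]
    rw [← map_sub]
    exact diag_sub_smul_map_single_sub_eq_zero _ hρ.1 hij
      (hconst _ _ (isSymChan_krausMap_rotPinchKraus hij 1 1 (by norm_num)) hpinch)
      (hconst _ _ (isSymChan_krausMap_rotPinchKraus hij 2 1 (by norm_num)) hpinch)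
  intro f hf
  rw [hconst f _ hf hpinch, krausMap_pinchKraus, ← sum_single_one, Finset.smul_sum, map_sum,
    map_sum]
  simpa only [map_smul, Fintype.card_fin, Finset.smul_sum, diag_apply] using
    Fintype.sum_smul_eq_inv_card_smul_sum _ _ htr hgap

/-- If a quantum channel `E` gives the same output `E(C(ρ))` for every channel `C` with
all-symmetric Kraus operators, then that output is `E(I/d)`. -/
theorem output_eq_of_constant_on_symmetric_channels {d e : ℕ} (hd : 0 < d)
    (E : Matrix (Fin d) (Fin d) ℂ → Matrix (Fin e) (Fin e) ℂ)
    (hE : ∃ (r : ℕ) (K : Fin r → Matrix (Fin e) (Fin d) ℂ),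
      (∑ i, (K i)ᴴ * K i = 1) ∧ ∀ ρ, E ρ = ∑ i, K i * ρ * (K i)ᴴ)
    (ρ : Matrix (Fin d) (Fin d) ℂ) (hρ : ρ.PosSemidef) (htr : ρ.trace = 1)
    (hconst : ∀ f g, IsSymChan f → IsSymChan g → E (f ρ) = E (g ρ)) :
    ∀ f, IsSymChan f → E (f ρ) = E ((d : ℂ)⁻¹ • (1 : Matrix (Fin d) (Fin d) ℂ)) :=
  output_eq_of_constant_on_symmetric_channels_general E hE ρ hρ htr hconst
end
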